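/- Let a ∈ A and suppose the sequence (c_j) in A satisfies [a] = Σ_{j=0}^∞ s_φ(c_j)·V^j(1) in W(A). Then for every i ≥ 1, φ^{i+1}(c_{i+1}) − φ^i(c_i)·a^{p^i(p−1)} lies in p^i·A. -/

import Mathlib

open WittVector

/-- `x = Σ_{i=0}^∞ s(a_i)·V^i(1)` in `W(A)`: for every `n`, the difference
`x − Σ_{i<n} s(a_i)·V^i(1)` lies in the image of `V^n`. -/
def IsVSeries (p : ℕ) [Fact p.Prime] {k : Type*} [CommRing k]
    (s : WittVector p k →+* WittVector p (WittVector p k))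
    (x : WittVector p (WittVector p k)) (a : ℕ → WittVector p k) : Prop :=
  ∀ n : ℕ, ∃ y : WittVector p (WittVector p k),
    x - ∑ i ∈ Finset.range n, s (a i) * (⇑(WittVector.verschiebung))^[i] 1
      = (⇑(WittVector.verschiebung))^[n] y


/-!
Write `F` for the Frobenius of `A = W(k)`. Taking ghost components of `[a] = Σ s(c_j)·V^j(1)`
gives `a^(p^m) = Σ_{j ≤ m} p^j F^m(c_j)` for every `m`, and comparing this identity at `m + 1`
with `F` applied to it at `m` isolates `p^(m+1) F^(m+1)(c_(m+1)) = a^(p^(m+1)) - F(a)^(p^m)`.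
Put `Z = a^(p^i)` and `W = F(a)^(p^(i-1))`. Multiplied by `p^(i+1)`, the claimed element becomes
`Z^p - W^p - p (Z - W) Z^(p-1)`. Since `a^p ≡ F(a) mod p`, we have `Z ≡ W mod p^i`, and a binomial
expansion shows that this expression is divisible by `p^(2i+1)` when `p` is odd. As `A` has no
`p`-torsion, `p^(i+1)` can be cancelled.
-/

theorem Nat.Prime.pow_dvd_pow_sub_pow_sub_mul {R : Type*} [CommRing R] {p n : ℕ}
    (hp : p.Prime) (hodd : Odd p) (hn : 1 ≤ n) {x y : R} (hxy : (p : R) ^ n ∣ y - x) :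
    (p : R) ^ (2 * n + 1) ∣ y ^ p - x ^ p - p * (y - x) * x ^ (p - 1) := by
  have hp3 : 3 ≤ p := by have := hp.two_le; have := Nat.odd_iff.mp hodd; omega
  obtain ⟨δ, rfl⟩ : ∃ δ, y = x + δ := ⟨y - x, by ring⟩
  rw [add_sub_cancel_left] at hxy ⊢
  obtain ⟨q, rfl⟩ : ∃ q, p = q + 2 := ⟨p - 2, by omega⟩
  -- the binomial terms with `δ ^ 0` and `δ ^ 1` cancel against `x ^ p + p δ x ^ (p - 1)`
  rw [add_comm x, add_pow, Finset.sum_range_succ', Finset.sum_range_succ']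
  simp only [pow_zero, one_mul, Nat.sub_zero, Nat.choose_zero_right, Nat.cast_one, mul_one,
    zero_add, pow_one, Nat.choose_one_right, add_sub_cancel_right]
  rw [mul_comm (δ * _), ← mul_assoc, add_sub_cancel_right]
  refine Finset.dvd_sum fun i hi => ?_
  have hsq : (↑(q + 2) : R) ^ (2 * n) ∣ δ ^ 2 := by
    rw [pow_mul']; exact pow_dvd_pow_of_dvd hxy 2
  rcases (Nat.lt_succ_iff.mp (Finset.mem_range.mp hi)).lt_or_eq with hi | rfl
  · have hchoose : (↑(q + 2) : R) ∣ ((q + 2).choose (i + 2) : R) :=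
      Nat.cast_dvd_cast (hp.dvd_choose_self (by omega) (by omega))
    rw [pow_succ]
    exact mul_dvd_mul ((hsq.trans (pow_dvd_pow δ (by omega))).mul_right _) hchoose
  · -- the top term `δ ^ p` needs `n p ≥ 2 n + 1`, which fails for `p = 2`
    have hδp : (↑(i + 2) : R) ^ (n * (i + 2)) ∣ δ ^ (i + 2) := by
      rw [pow_mul]; exact pow_dvd_pow_of_dvd hxy _
    simp only [Nat.choose_self, Nat.sub_self, pow_zero, Nat.cast_one, mul_one]
    exact (pow_dvd_pow _ (by nlinarith)).trans hδp

theorem pow_mul_iterate_succ_eq_sub {R : Type*} [CommRing R] (q : ℕ) (f : R →+* R) (b : R)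
    (c : ℕ → R) (h : ∀ m, b ^ q ^ m = ∑ j ∈ Finset.range (m + 1), (q : R) ^ j * f^[m] (c j))
    (m : ℕ) : (q : R) ^ (m + 1) * f^[m + 1] (c (m + 1)) = b ^ q ^ (m + 1) - f b ^ q ^ m := by
  have hf : f b ^ q ^ m = ∑ j ∈ Finset.range (m + 1), (q : R) ^ j * f^[m + 1] (c j) := by
    rw [← map_pow, h m, map_sum]
    simp only [map_mul, map_pow, map_natCast, Function.iterate_succ_apply']
  rw [h (m + 1), Finset.sum_range_succ, hf, add_sub_cancel_left]

namespace WittVector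

variable {p : ℕ} [Fact p.Prime]

section Ghost

variable {R : Type*} [CommRing R]

theorem ghostComponent_add_iterate_verschiebung (x : WittVector p R) (m j : ℕ) :
    ghostComponent (m + j) ((⇑verschiebung)^[j] x) = (p : R) ^ j * ghostComponent m x := by
  induction j with
  | zero => simp
  | succ j ih =>
    rw [Function.iterate_succ_apply', ← add_assoc, ghostComponent_verschiebung, ih, pow_succ',
      mul_assoc]

theorem ghostComponent_iterate_verschiebung_of_lt (x : WittVector p R) {m j : ℕ} (h : m < j) :
    ghostComponent m ((⇑verschiebung)^[j] x) = 0 := by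
  induction j generalizing m with
  | zero => omega
  | succ j ih =>
    rw [Function.iterate_succ_apply']
    cases m with
    | zero => exact ghostComponent_zero_verschiebung _
    | succ m => rw [ghostComponent_verschiebung, ih (by omega), mul_zero]

end Ghost

section Perfect

variable {k : Type*} [CommRing k] [CharP k p] [PerfectRing k p]

theorem isLeftRegular_natCast_prime : IsLeftRegular (p : WittVector p k) :=
  isLeftRegular_of_non_zero_divisor _ fun x hx ↦ eq_zero_of_p_mul_eq_zero x (by rwa [mul_comm])

theorem natCast_dvd_frobenius_sub_pow (x : WittVector p k) :
    (p : WittVector p k) ∣ frobenius x - x ^ p := by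
  rw [← Ideal.mem_span_singleton, mem_span_p_iff_coeff_zero_eq_zero, ← constantCoeff_apply,
    map_sub, map_pow, constantCoeff_apply, constantCoeff_apply, coeff_frobenius_charP, sub_self]

end Perfect

end WittVector

theorem IsVSeries.ghostComponent_eq_sum {p : ℕ} [Fact p.Prime] {k : Type*} [CommRing k]
    {s : WittVector p k →+* WittVector p (WittVector p k)} {x : WittVector p (WittVector p k)}
    {c : ℕ → WittVector p k} (hc : IsVSeries p s x c) (m : ℕ) :
    ghostComponent m x
      = ∑ j ∈ Finset.range (m + 1), (p : WittVector p k) ^ j * ghostComponent m (s (c j)) := by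
  obtain ⟨y, hy⟩ := hc (m + 1)
  have hterm : ∀ j ∈ Finset.range (m + 1),
      ghostComponent m (s (c j) * (⇑verschiebung)^[j] 1)
        = (p : WittVector p k) ^ j * ghostComponent m (s (c j)) := by
    intro j hj
    obtain ⟨l, rfl⟩ : ∃ l, m = l + j := ⟨m - j, by have := Finset.mem_range.mp hj; omega⟩
    rw [map_mul, ghostComponent_add_iterate_verschiebung, map_one, mul_one, mul_comm]
  rw [← Finset.sum_congr rfl hterm, ← map_sum, ← sub_eq_zero, ← map_sub, hy,
    ghostComponent_iterate_verschiebung_of_lt _ (Nat.lt_succ_self m)]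

theorem stmt_13 (p : ℕ) [Fact p.Prime] (hp : Odd p)
    (k : Type*) [CommRing k] [CharP k p] [PerfectRing k p]
    (s : WittVector p k →+* WittVector p (WittVector p k))
    (hs : ∀ (a : WittVector p k) (n : ℕ),
      WittVector.ghostComponent n (s a) = (⇑(WittVector.frobenius))^[n] a)
    (a : WittVector p k) (c : ℕ → WittVector p k)
    (hc : IsVSeries p s (WittVector.teichmuller p a) c) :
    ∀ i : ℕ, 1 ≤ i → ∃ t : WittVector p k,
      (⇑(WittVector.frobenius))^[i + 1] (c (i + 1))
        - (⇑(WittVector.frobenius))^[i] (c i) * a ^ (p ^ i * (p - 1))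
        = (p : WittVector p k) ^ i * t := by
  intro i hi
  obtain ⟨n, rfl⟩ : ∃ n, i = n + 1 := ⟨i - 1, by omega⟩
  have hghost (m : ℕ) : a ^ p ^ m
      = ∑ j ∈ Finset.range (m + 1), (p : WittVector p k) ^ j * frobenius^[m] (c j) := by
    simpa only [ghostComponent_teichmuller, hs] using hc.ghostComponent_eq_sum m
  have hlow := pow_mul_iterate_succ_eq_sub p frobenius a c hghost n
  have hhigh := pow_mul_iterate_succ_eq_sub p frobenius a c hghost (n + 1)
  have hcongr : (p : WittVector p k) ^ (n + 1) ∣ frobenius a ^ p ^ n - a ^ p ^ (n + 1) := by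
    simpa only [← pow_mul, ← pow_succ'] using
      dvd_sub_pow_of_dvd_sub (natCast_dvd_frobenius_sub_pow a) n
  obtain ⟨t, ht⟩ := (Fact.out : p.Prime).pow_dvd_pow_sub_pow_sub_mul hp (by omega) hcongr
  refine ⟨-t, (isLeftRegular_natCast_prime.pow (n + 2)) ?_⟩
  linear_combination hhigh - (p : WittVector p k) * a ^ (p ^ (n + 1) * (p - 1)) * hlow - ht
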